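/- arXiv:1506.08107 — 5 statements merged into one kernel-verified Lean document; each statement's English description precedes it below -/
import Mathlib

section
/- With g_n as in the Poincaré recursion in noncommutative symmetric functions and g̃_n = (q;q)_n g_n where (q;q)_n = (q-1)(q^2-1)···(q^n-1), one has g̃_2 = (q-1)S_2 + 2 S_1 S_1 and g̃_3 = (q-1)(q^2-1) S_3 + 3(q^2-1) S_2 S_1 + 2(q-1) S_1 S_2 + (5+q) S_1 S_1 S_1. -/
/-!
The inner sum over `(k+1)`-tuples in the recursion is the `(n-k)`-th coefficient of the power
series `g^(k+1)`, so in degrees 1, 2, 3 the recursion reads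
`(q-1) g₁ = S₁`, `(q²-1) g₂ = S₁ (2 g₁) + S₂`, `(q³-1) g₃ = S₁ (g₂ + g₁g₁ + g₂) + S₂ (3 g₁) + S₃`.
As `q` is central, `A` is an algebra over the commutative ring `center A ∋ q`. Solving the three
equations for `S₁, S₂, S₃` and substituting turns both claims into identities between
`q`-linear combinations of words in `g₁, g₂, g₃`.
-/

open Finset PowerSeries

theorem Finset.Nat.sum_antidiagonalTuple_succ {M : Type*} [AddCommMonoid M] (k n : ℕ)
    (F : (Fin (k + 1) → ℕ) → M) :
    ∑ f ∈ Nat.antidiagonalTuple (k + 1) n, F f =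
      ∑ p ∈ antidiagonal n, ∑ f ∈ Nat.antidiagonalTuple k p.2, F (Fin.cons p.1 f) := by
  simp only [Finset.sum, Nat.antidiagonalTuple, Multiset.Nat.antidiagonalTuple,
    List.Nat.antidiagonalTuple, HasAntidiagonal.antidiagonal, Multiset.Nat.antidiagonal,
    Multiset.map_coe, Multiset.sum_coe, List.map_flatMap, List.map_map]
  rw [List.flatMap_def, List.sum_flatten, List.map_map]
  rfl

section PowerCoefficients

variable {R : Type*} [Semiring R] (g : ℕ → R)

theorem sum_antidiagonalTuple_prod_ofFn_eq_coeff_pow (k n : ℕ) :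
    ∑ f ∈ Nat.antidiagonalTuple k n, (List.ofFn fun i => g (f i)).prod = coeff n (mk g ^ k) := by
  induction k generalizing n with
  | zero => cases n <;> simp
  | succ k ih =>
    simp only [Nat.sum_antidiagonalTuple_succ, List.ofFn_succ, Fin.cons_zero, Fin.cons_succ,
      List.prod_cons, ← mul_sum, ih, pow_succ', coeff_mul, coeff_mk]

theorem coeff_zero_mk_pow (k : ℕ) : coeff 0 (mk g ^ k) = g 0 ^ k := by
  simp [coeff_zero_eq_constantCoeff_apply, constantCoeff_mk]

theorem coeff_one_mk_pow (hg0 : g 0 = 1) (k : ℕ) : coeff 1 (mk g ^ k) = k * g 1 := by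
  induction k with
  | zero => simp
  | succ k ih =>
    simp [pow_succ', coeff_mul, Nat.sum_antidiagonal_succ, ih, coeff_zero_mk_pow, hg0, add_mul]

theorem coeff_two_mk_sq : coeff 2 (mk g ^ 2) = g 0 * g 2 + g 1 * g 1 + g 2 * g 0 := by
  simp [sq, coeff_mul, Nat.sum_antidiagonal_succ, add_assoc]

end PowerCoefficients

section PoincareRecursion

variable {A : Type*} [Semiring A]

/-- The degree-`n` part of `∑ₖ Sₖ g^(k+1)`, where `g = ∑ᵢ gᵢ` with `gᵢ` of degree `i`. -/
noncomputable def poincareRHS (S g : ℕ → A) (n : ℕ) : A :=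
  ∑ k ∈ Icc 1 n, S k * coeff (n - k) (mk g ^ (k + 1))

theorem poincareRHS_one (S : ℕ → A) {g : ℕ → A} (hg0 : g 0 = 1) : poincareRHS S g 1 = S 1 := by
  simp [poincareRHS, coeff_zero_mk_pow, hg0]

theorem poincareRHS_two (S : ℕ → A) {g : ℕ → A} (hg0 : g 0 = 1) :
    poincareRHS S g 2 = S 1 * (2 * g 1) + S 2 := by
  simp [poincareRHS, sum_Icc_succ_top, coeff_zero_mk_pow, coeff_one_mk_pow g hg0, hg0]

theorem poincareRHS_three (S : ℕ → A) {g : ℕ → A} (hg0 : g 0 = 1) :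
    poincareRHS S g 3 = S 1 * (g 2 + g 1 * g 1 + g 2) + S 2 * (3 * g 1) + S 3 := by
  simp [poincareRHS, sum_Icc_succ_top, coeff_zero_mk_pow, coeff_one_mk_pow g hg0, coeff_two_mk_sq,
    hg0]

end PoincareRecursion

section Clearing

variable {R A : Type*} [CommRing R] [Ring A] [Algebra R A] {q : R} {g₁ g₂ g₃ s₁ s₂ s₃ : A}

theorem poincare_cleared_two (h₁ : (q - 1) • g₁ = s₁)
    (h₂ : (q ^ 2 - 1) • g₂ = s₁ * (2 * g₁) + s₂) :
    ((q - 1) * (q ^ 2 - 1)) • g₂ = (q - 1) • s₂ + 2 * (s₁ * s₁) := by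
  subst h₁
  obtain rfl := eq_sub_of_add_eq' h₂.symm
  -- Turn the numerals of `A` into scalars of `R`, so that `module` can see them.
  simp only [← Nat.ofNat_nsmul_eq_mul]
  simp only [← ofNat_smul_eq_nsmul R]
  simp only [smul_sub, mul_sub, mul_smul_comm, smul_mul_assoc, smul_smul]
  module

theorem poincare_cleared_three (h₁ : (q - 1) • g₁ = s₁)
    (h₂ : (q ^ 2 - 1) • g₂ = s₁ * (2 * g₁) + s₂)
    (h₃ : (q ^ 3 - 1) • g₃ = s₁ * (g₂ + g₁ * g₁ + g₂) + s₂ * (3 * g₁) + s₃) :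
    ((q - 1) * (q ^ 2 - 1) * (q ^ 3 - 1)) • g₃ =
      ((q - 1) * (q ^ 2 - 1)) • s₃ + 3 * ((q ^ 2 - 1) • (s₂ * s₁)) +
        2 * ((q - 1) • (s₁ * s₂)) + (5 + q) • (s₁ * s₁ * s₁) := by
  subst h₁
  obtain rfl := eq_sub_of_add_eq' h₂.symm
  obtain rfl := eq_sub_of_add_eq' h₃.symm
  simp only [← Nat.ofNat_nsmul_eq_mul]
  simp only [← ofNat_smul_eq_nsmul R]
  simp only [smul_sub, mul_add, add_mul, mul_sub, sub_mul, mul_smul_comm, smul_mul_assoc, smul_smul,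
    mul_assoc]
  module

end Clearing

/-- **Cleared first terms of the Poincaré recursion.** Let `g : ℕ → A` satisfy the Poincaré
recursion in a ring in which `q` is central, with `g 0 = 1`, and set
`g̃_n = (q-1)(q^2-1)⋯(q^n-1) g_n`.  Then
`g̃_2 = (q-1) S_2 + 2 S_1 S_1` and
`g̃_3 = (q-1)(q^2-1) S_3 + 3 (q^2-1) S_2 S_1 + 2 (q-1) S_1 S_2 + (5+q) S_1 S_1 S_1`. -/
theorem poincare_cleared_first_terms
    {A : Type*} [Ring A] (q : A) (hq : ∀ a : A, Commute q a)
    (S : ℕ → A) (g : ℕ → A)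
    (hg0 : g 0 = 1)
    (hrec : ∀ n : ℕ, 1 ≤ n →
      (q ^ n - 1) * g n =
        ∑ k ∈ Finset.Icc 1 n, S k *
          ∑ f ∈ Finset.Nat.antidiagonalTuple (k + 1) (n - k),
            (List.ofFn fun i => g (f i)).prod) :
    ((q - 1) * (q ^ 2 - 1)) * g 2 = (q - 1) * S 2 + 2 * (S 1 * S 1) ∧
    ((q - 1) * (q ^ 2 - 1) * (q ^ 3 - 1)) * g 3 =
      ((q - 1) * (q ^ 2 - 1)) * S 3 + 3 * ((q ^ 2 - 1) * (S 2 * S 1)) +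
        2 * ((q - 1) * (S 1 * S 2)) + (5 + q) * (S 1 * S 1 * S 1) := by
  let c : Subring.center A := ⟨q, Subring.mem_center_iff.2 fun a => (hq a).eq.symm⟩
  have hrec' (n : ℕ) (hn : 1 ≤ n) : (c ^ n - 1) • g n = poincareRHS S g n := by
    simp only [poincareRHS, ← sum_antidiagonalTuple_prod_ofFn_eq_coeff_pow]
    -- `c ^ n - 1` acts on `A` as left multiplication by `q ^ n - 1`, definitionally.
    exact hrec n hn
  have h₁ := (hrec' 1 le_rfl).trans (poincareRHS_one S hg0)
  have h₂ := (hrec' 2 one_le_two).trans (poincareRHS_two S hg0)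
  have h₃ := (hrec' 3 (by norm_num)).trans (poincareRHS_three S hg0)
  rw [pow_one] at h₁
  have h₂' := poincare_cleared_two h₁ h₂
  have h₃' := poincare_cleared_three h₁ h₂ h₃
  simp only [Subring.smul_def, smul_eq_mul] at h₂' h₃'
  exact ⟨by exact_mod_cast h₂', by exact_mod_cast h₃'⟩
end

section
/- Setting q = 1 in the cleared Poincaré recursion, g̃_n specializes to n! · S_1^n; that is, the polynomials g̃_n ∈ Sym ⊗ ℚ[q] satisfy g̃_n|_{q=1} = n! S_1^n for all n ≥ 1. -/
/-!
Multiplying the recursion for `g_{m+1}` by `(q;q)_m` gives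
`g̃_{m+1} = ∑_n S_n ∑_f c_f(q) ∏_i g̃_{f_i}`, with `f` running over `(n+1)`-tuples of sum
`m + 1 - n` and `c_f = (q;q)_m / ∏_i (q;q)_{f_i}`. This quotient is a polynomial: the
`q`-multinomial coefficient of `f` times `∏_{∑ f < k ≤ m} (q^k - 1)`. By induction every `g̃_m`
therefore has coefficients in `ℚ[q]`. At `q = 1` the extra factors vanish unless `n = 1`, and the
`q`-multinomial becomes `m! / ∏_i f_i!`, so `g̃_{m+1}(1) = S_1 · (m + 1) · m! S_1^m`.
-/

noncomputable section

open Finset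

/-- The noncommutative Fa`a di Bruno / noncommutative symmetric function model: the monoid
algebra over `ℚ(q)` of the free monoid on positive integer letters; the basis element
indexed by the word (composition) `I = (i_1,…,i_r)` represents `S^I = S_{i_1}⋯S_{i_r}`. -/
abbrev NSym := MonoidAlgebra (RatFunc ℚ) (FreeMonoid ℕ)

/-- `S^I` for a composition (word) `I`. -/
def Sw (l : List ℕ) : NSym := MonoidAlgebra.single (FreeMonoid.ofList l) 1

/-- The `q`-Pochhammer `(q;q)_n = (q-1)(q^2-1)⋯(q^n-1)` with `q = X`. -/
def qPoch (n : ℕ) : RatFunc ℚ := ∏ k ∈ Finset.Icc 1 n, ((RatFunc.X : RatFunc ℚ) ^ k - 1)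

open Polynomial
open scoped Nat

theorem List.prod_ofFn_smul {S A : Type*} [CommMonoid S] [Monoid A] [MulAction S A]
    [IsScalarTower S A A] [SMulCommClass S A A] {r : ℕ} (c : Fin r → S) (x : Fin r → A) :
    (List.ofFn fun i => c i • x i).prod = (∏ i, c i) • (List.ofFn x).prod := by
  induction r with
  | zero => simp
  | succ r ih =>
    rw [List.ofFn_succ, List.prod_cons, ih, List.ofFn_succ, List.prod_cons, Fin.prod_univ_succ,
      smul_mul_smul_comm]

theorem List.prod_ofFn_pow {A : Type*} [Monoid A] (x : A) {r : ℕ} (k : Fin r → ℕ) :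
    (List.ofFn fun i => x ^ k i).prod = x ^ ∑ i, k i := by
  induction r with
  | zero => simp
  | succ r ih => rw [List.ofFn_succ, List.prod_cons, ih, Fin.sum_univ_succ, pow_add]

theorem MonoidAlgebra.mapRingHom_smul {R S M : Type*} [CommSemiring R] [CommSemiring S] [Monoid M]
    (f : R →+* S) (c : R) (x : MonoidAlgebra R M) :
    mapRingHom M f (c • x) = f c • mapRingHom M f x := by
  ext w
  simp

section QAnalogues

variable (R : Type*) [CommRing R]

def qPochPoly (n : ℕ) : R[X] := ∏ k ∈ Icc 1 n, (X ^ k - 1)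

def qBinomial : ℕ → ℕ → R[X]
  | 0, _ => 1
  | _, 0 => 1
  | a + 1, b + 1 => qBinomial a (b + 1) + X ^ (a + 1) * qBinomial (a + 1) b

def qMultinomial : {r : ℕ} → (Fin r → ℕ) → R[X]
  | 0, _ => 1
  | r + 1, f => qBinomial R (f 0) (∑ i : Fin r, f i.succ) * qMultinomial fun i : Fin r => f i.succ

/-- `(q;q)_t / ∏ i, (q;q)_{f i}`, a polynomial as soon as `∑ i, f i ≤ t`. -/
def clearingCoeff {r : ℕ} (t : ℕ) (f : Fin r → ℕ) : R[X] :=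
  (∏ k ∈ Ioc (∑ i, f i) t, (X ^ k - 1)) * qMultinomial R f

variable {R}

theorem qPochPoly_succ (n : ℕ) : qPochPoly R (n + 1) = qPochPoly R n * (X ^ (n + 1) - 1) :=
  prod_Icc_succ_top (Nat.le_add_left 1 n) _

theorem qPochPoly_mul_prod_Ioc {s t : ℕ} (h : s ≤ t) :
    qPochPoly R s * ∏ k ∈ Ioc s t, (X ^ k - 1) = qPochPoly R t := by
  rw [qPochPoly, qPochPoly, ← zero_add 1, Icc_add_one_left_eq_Ioc, Icc_add_one_left_eq_Ioc]
  exact prod_Ioc_consecutive _ s.zero_le h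

theorem eval_one_prod_Ioc (s t : ℕ) :
    eval 1 (∏ k ∈ Ioc s t, (X ^ k - 1) : R[X]) = if t ≤ s then 1 else 0 := by
  split_ifs with h
  · simp [Ioc_eq_empty_of_le h]
  · rw [eval_prod]
    exact prod_eq_zero (right_mem_Ioc.mpr (not_le.mp h)) (by simp)

theorem qPochPoly_mul_qPochPoly_mul_qBinomial (a b : ℕ) :
    qPochPoly R a * qPochPoly R b * qBinomial R a b = qPochPoly R (a + b) := by
  induction a generalizing b with
  | zero => simp [qBinomial, qPochPoly]
  | succ a iha =>
    induction b with
    | zero => simp [qBinomial, qPochPoly]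
    | succ b ihb =>
      have expand : qPochPoly R (a + 1) * qPochPoly R (b + 1) * qBinomial R (a + 1) (b + 1) =
          (X ^ (a + 1) - 1) * (qPochPoly R a * qPochPoly R (b + 1) * qBinomial R a (b + 1)) +
            X ^ (a + 1) * (X ^ (b + 1) - 1) *
              (qPochPoly R (a + 1) * qPochPoly R b * qBinomial R (a + 1) b) := by
        rw [qBinomial, qPochPoly_succ a, qPochPoly_succ b]
        ring
      rw [expand, iha, ihb, show a + (b + 1) = a + b + 1 by omega,
        show a + 1 + b = a + b + 1 by omega, show a + 1 + (b + 1) = a + b + 1 + 1 by omega,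
        qPochPoly_succ (a + b + 1)]
      ring

theorem eval_one_qBinomial (a b : ℕ) : eval 1 (qBinomial R a b) = (a + b).choose a := by
  induction a generalizing b with
  | zero => simp [qBinomial]
  | succ a iha =>
    induction b with
    | zero => simp [qBinomial]
    | succ b ihb =>
      rw [qBinomial, eval_add, eval_mul, iha, ihb, eval_pow, eval_X, one_pow, one_mul,
        show a + (b + 1) = a + b + 1 by omega, show a + 1 + b = a + b + 1 by omega,
        show a + 1 + (b + 1) = a + b + 1 + 1 by omega, Nat.choose_succ_succ (a + b + 1) a,
        Nat.cast_add]

theorem qMultinomial_mul_prod_qPochPoly {r : ℕ} (f : Fin r → ℕ) :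
    qMultinomial R f * ∏ i, qPochPoly R (f i) = qPochPoly R (∑ i, f i) := by
  induction r with
  | zero => simp [qMultinomial, qPochPoly]
  | succ r ih =>
    rw [qMultinomial, Fin.prod_univ_succ, Fin.sum_univ_succ,
      ← qPochPoly_mul_qPochPoly_mul_qBinomial, ← ih]
    ring

theorem eval_one_qMultinomial_mul_prod_factorial {r : ℕ} (f : Fin r → ℕ) :
    eval 1 (qMultinomial R f) * ∏ i, ((f i)! : R) = (∑ i, f i)! := by
  induction r with
  | zero => simp [qMultinomial]
  | succ r ih =>
    rw [qMultinomial, eval_mul, eval_one_qBinomial, Fin.prod_univ_succ, Fin.sum_univ_succ,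
      Nat.choose_symm_add, ← Nat.add_choose_mul_factorial_mul_factorial, Nat.cast_mul, Nat.cast_mul,
      ← ih]
    ring

theorem clearingCoeff_mul_prod_qPochPoly {r t : ℕ} {f : Fin r → ℕ} (h : ∑ i, f i ≤ t) :
    clearingCoeff R t f * ∏ i, qPochPoly R (f i) = qPochPoly R t := by
  rw [clearingCoeff, mul_assoc, qMultinomial_mul_prod_qPochPoly, mul_comm,
    qPochPoly_mul_prod_Ioc h]

theorem eval_one_clearingCoeff_mul_prod_factorial {r : ℕ} (t : ℕ) (f : Fin r → ℕ) :
    eval 1 (clearingCoeff R t f) * ∏ i, ((f i)! : R) =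
      if t ≤ ∑ i, f i then ((∑ i, f i)! : R) else 0 := by
  rw [clearingCoeff, eval_mul, mul_assoc, eval_one_qMultinomial_mul_prod_factorial,
    eval_one_prod_Ioc, ite_mul, one_mul, zero_mul]

end QAnalogues

theorem algebraMap_qPochPoly (n : ℕ) : algebraMap ℚ[X] (RatFunc ℚ) (qPochPoly ℚ n) = qPoch n := by
  simp [qPochPoly, qPoch, map_prod]

theorem Finset.Nat.le_of_mem_antidiagonalTuple {k s : ℕ} {f : Fin k → ℕ}
    (hf : f ∈ Finset.Nat.antidiagonalTuple k s) (i : Fin k) : f i ≤ s :=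
  Finset.Nat.mem_antidiagonalTuple.mp hf ▸ single_le_sum (fun _ _ => Nat.zero_le _) (mem_univ i)

theorem qPoch_succ (n : ℕ) : qPoch (n + 1) = qPoch n * (RatFunc.X ^ (n + 1) - 1) := by
  rw [← algebraMap_qPochPoly, qPochPoly_succ, map_mul, algebraMap_qPochPoly]
  simp

/-- Evaluation at `q = 1` only makes sense on `ℚ[q]`-coefficients, so `g̃_n` is tracked through a
lift to this algebra. -/
abbrev PolyNSym := MonoidAlgebra ℚ[X] (FreeMonoid ℕ)

abbrev toNSym : PolyNSym →+* NSym := MonoidAlgebra.mapRingHom _ (algebraMap ℚ[X] (RatFunc ℚ))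

abbrev evalOne : PolyNSym →+* MonoidAlgebra ℚ (FreeMonoid ℕ) :=
  MonoidAlgebra.mapRingHom _ (evalRingHom 1)

def S₁ : MonoidAlgebra ℚ (FreeMonoid ℕ) := MonoidAlgebra.single (FreeMonoid.of 1) 1

def IsClearedLift (n : ℕ) (x : NSym) (P : PolyNSym) : Prop :=
  toNSym P = qPoch n • x ∧ evalOne P = (n ! : ℚ) • S₁ ^ n

theorem toNSym_clearingCoeff_smul_mul_prod {r t : ℕ} {f : Fin r → ℕ} (hf : ∑ i, f i ≤ t)
    (x : PolyNSym) (P : ℕ → PolyNSym) (g : ℕ → NSym)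
    (hP : ∀ i, toNSym (P (f i)) = qPoch (f i) • g (f i)) :
    toNSym (clearingCoeff ℚ t f • (x * (List.ofFn fun i => P (f i)).prod)) =
      qPoch t • (toNSym x * (List.ofFn fun i => g (f i)).prod) := by
  have hcoeff : algebraMap ℚ[X] (RatFunc ℚ) (clearingCoeff ℚ t f) * ∏ i, qPoch (f i) = qPoch t := by
    simp only [← algebraMap_qPochPoly, ← map_prod, ← map_mul, clearingCoeff_mul_prod_qPochPoly hf]
  rw [MonoidAlgebra.mapRingHom_smul, map_mul, map_list_prod, List.map_ofFn, Function.comp_def]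
  simp only [hP]
  rw [List.prod_ofFn_smul, mul_smul_comm, smul_smul, hcoeff]

theorem evalOne_clearingCoeff_smul_mul_prod {r : ℕ} (t : ℕ) (f : Fin r → ℕ)
    (x : PolyNSym) (P : ℕ → PolyNSym) (hP : ∀ i, evalOne (P (f i)) = ((f i)! : ℚ) • S₁ ^ f i) :
    evalOne (clearingCoeff ℚ t f • (x * (List.ofFn fun i => P (f i)).prod)) =
      (if t ≤ ∑ i, f i then ((∑ i, f i)! : ℚ) else 0) • (evalOne x * S₁ ^ ∑ i, f i) := by
  rw [MonoidAlgebra.mapRingHom_smul, map_mul, map_list_prod, List.map_ofFn, Function.comp_def]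
  simp only [hP]
  rw [List.prod_ofFn_smul, List.prod_ofFn_pow, mul_smul_comm, smul_smul, coe_evalRingHom,
    eval_one_clearingCoeff_mul_prod_factorial]

def clearedStep (P : ℕ → PolyNSym) (m : ℕ) : PolyNSym :=
  ∑ n ∈ Icc 1 (m + 1), ∑ f ∈ Finset.Nat.antidiagonalTuple (n + 1) (m + 1 - n),
    clearingCoeff ℚ m f • (MonoidAlgebra.single (FreeMonoid.ofList [n]) 1 *
      (List.ofFn fun i => P (f i)).prod)

theorem toNSym_clearedStep (P : ℕ → PolyNSym) (g : ℕ → NSym) (m : ℕ)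
    (hP : ∀ k ≤ m, toNSym (P k) = qPoch k • g k) :
    toNSym (clearedStep P m) = qPoch m • ∑ n ∈ Icc 1 (m + 1), Sw [n] *
      ∑ f ∈ Finset.Nat.antidiagonalTuple (n + 1) (m + 1 - n),
        (List.ofFn fun i => g (f i)).prod := by
  rw [clearedStep, map_sum, smul_sum]
  refine sum_congr rfl fun n hn => ?_
  rw [map_sum, mul_sum, smul_sum]
  refine sum_congr rfl fun f hf => ?_
  have hn1 := (mem_Icc.mp hn).1
  have hsum : ∑ i, f i ≤ m := by rw [Finset.Nat.mem_antidiagonalTuple.mp hf]; omega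
  rw [toNSym_clearingCoeff_smul_mul_prod hsum _ P g
    fun i => hP _ ((Finset.Nat.le_of_mem_antidiagonalTuple hf i).trans (by omega)),
    MonoidAlgebra.mapRingHom_single, map_one, Sw]

theorem evalOne_clearedStep (P : ℕ → PolyNSym) (m : ℕ)
    (hP : ∀ k ≤ m, evalOne (P k) = (k ! : ℚ) • S₁ ^ k) :
    evalOne (clearedStep P m) = ((m + 1)! : ℚ) • S₁ ^ (m + 1) := by
  have term : ∀ n ∈ Icc 1 (m + 1), ∀ f ∈ Finset.Nat.antidiagonalTuple (n + 1) (m + 1 - n),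
      evalOne (clearingCoeff ℚ m f • (MonoidAlgebra.single (FreeMonoid.ofList [n]) 1 *
        (List.ofFn fun i => P (f i)).prod)) = if n = 1 then (m ! : ℚ) • S₁ ^ (m + 1) else 0 := by
    intro n hn f hf
    have hsum := Finset.Nat.mem_antidiagonalTuple.mp hf
    obtain ⟨hn1, hnm⟩ := mem_Icc.mp hn
    rw [evalOne_clearingCoeff_smul_mul_prod m f _ P
      fun i => hP _ ((Finset.Nat.le_of_mem_antidiagonalTuple hf i).trans (by omega)),
      MonoidAlgebra.mapRingHom_single, map_one, hsum]
    by_cases h1 : n = 1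
    · subst h1
      rw [if_pos (by omega), if_pos rfl, Nat.add_sub_cancel]
      exact congrArg _ (pow_succ' S₁ m).symm
    · rw [if_neg (show ¬m ≤ m + 1 - n by omega), if_neg h1, zero_smul]
  rw [clearedStep, map_sum, sum_eq_single_of_mem 1 (left_mem_Icc.mpr (by omega))]
  · rw [map_sum, sum_congr rfl (term 1 (left_mem_Icc.mpr (by omega))), sum_const,
      Finset.Nat.antidiagonalTuple_two, card_map, Finset.Nat.card_antidiagonal, if_pos rfl,
      ← Nat.cast_smul_eq_nsmul ℚ, smul_smul, Nat.factorial_succ, Nat.cast_mul, Nat.add_sub_cancel]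
  · intro n hn hne
    rw [map_sum]
    exact sum_eq_zero fun f hf => (term n hn f hf).trans (if_neg hne)

theorem exists_isClearedLift (g : ℕ → NSym) (hg0 : g 0 = 1)
    (hrec : ∀ m : ℕ, 1 ≤ m →
      ((RatFunc.X : RatFunc ℚ) ^ m) • g m =
        g m + ∑ n ∈ Finset.Icc 1 m, Sw [n] *
          ∑ f ∈ Finset.Nat.antidiagonalTuple (n + 1) (m - n),
            (List.ofFn fun i => g (f i)).prod) (m : ℕ) :
    ∃ P, IsClearedLift m (g m) P := by
  induction m using Nat.strong_induction_on with
  | _ m ih =>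
  cases m with
  | zero => exact ⟨1, by simp [IsClearedLift, hg0, qPoch]⟩
  | succ m =>
    have : ∀ k, ∃ P, k ≤ m → IsClearedLift k (g k) P := fun k =>
      if hk : k ≤ m then (ih k (by omega)).imp fun _ hP _ => hP else ⟨0, fun h => absurd h hk⟩
    choose P hP using this
    refine ⟨clearedStep P m, ?_, evalOne_clearedStep P m fun k hk => (hP k hk).2⟩
    rw [toNSym_clearedStep P g m fun k hk => (hP k hk).1, qPoch_succ, mul_smul, sub_smul,
      one_smul, hrec (m + 1) (by omega), add_sub_cancel_left]

theorem S₁_pow (n : ℕ) :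
    S₁ ^ n = MonoidAlgebra.single (FreeMonoid.ofList (List.replicate n 1)) 1 := by
  induction n with
  | zero => rfl
  | succ n ih =>
    rw [pow_succ, ih, S₁, MonoidAlgebra.single_mul_single, one_mul, List.replicate_succ',
      FreeMonoid.ofList_append, FreeMonoid.ofList_singleton]

theorem IsClearedLift.coeff {n : ℕ} {x : NSym} {P : PolyNSym} (h : IsClearedLift n x P)
    (l : List ℕ) :
    algebraMap ℚ[X] (RatFunc ℚ) (P.coeff (FreeMonoid.ofList l)) =
        qPoch n * x.coeff (FreeMonoid.ofList l) ∧
      eval 1 (P.coeff (FreeMonoid.ofList l)) = if l = List.replicate n 1 then (n ! : ℚ) else 0 := by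
  classical
  constructor
  · simpa using congrArg (MonoidAlgebra.coeff · (FreeMonoid.ofList l)) h.1
  · simpa [S₁_pow, Finsupp.single_apply, eq_comm]
      using congrArg (MonoidAlgebra.coeff · (FreeMonoid.ofList l)) h.2

/-- **Specialization at `q = 1`.** Let `g : ℕ → NSym` be the solution of the noncommutative
Poincaré equation `g(qA) = Σ_{n≥0} S_n(A) g(A)^{n+1}`, written componentwise as
`q^m • g_m = g_m + Σ_{n=1}^m S_n Σ_{i_1+⋯+i_{n+1}=m-n} g_{i_1}⋯g_{i_{n+1}}` with `g 0 = 1`.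
Then for each `n ≥ 1` and each composition `I` of `n`, the coefficient of `S^I` in
`g̃_n = (q;q)_n g_n` is a polynomial in `q` whose value at `q = 1` is `n!` if
`I = (1,1,…,1)` and `0` otherwise; that is, `g̃_n|_{q=1} = n! · S_1^n`. -/
theorem cleared_poincare_at_q_eq_one
    (g : ℕ → NSym) (hg0 : g 0 = 1)
    (hrec : ∀ m : ℕ, 1 ≤ m →
      ((RatFunc.X : RatFunc ℚ) ^ m) • g m =
        g m + ∑ n ∈ Finset.Icc 1 m, Sw [n] *
          ∑ f ∈ Finset.Nat.antidiagonalTuple (n + 1) (m - n),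
            (List.ofFn fun i => g (f i)).prod) :
    ∀ n : ℕ, 1 ≤ n → ∀ I : Composition n,
      ∃ p : Polynomial ℚ,
        algebraMap (Polynomial ℚ) (RatFunc ℚ) p =
          qPoch n * (g n).coeff (FreeMonoid.ofList I.blocks) ∧
        p.eval 1 = if I.blocks = List.replicate n 1 then ((Nat.factorial n : ℚ)) else 0 := by
  intro n _ I
  obtain ⟨P, hP⟩ := exists_isClearedLift g hg0 hrec n
  exact ⟨_, hP.coeff I.blocks⟩
end
end

section
/- Define bilinear B_q on compositions by B_q(S^I, S^J) = (S^{1IJ} + (q^{|I|}-1)·Ω S^{IJ})/(q^{|I|+|J|+1}-1), where Ω increases the first part of a composition by 1. Then the unique solution of g = 1 + B_q(g,g) in the completed algebra of noncommutative symmetric functions coincides with the solution of the Poincaré equation g(qA) = Σ_{n≥0} S_n(A) g(A)^{n+1}. -/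
/-!
Both recursions determine their solution degree by degree, so it suffices to show that the
solution `h` of the Poincaré equation satisfies `h (m + 1) = ∑_{i+j=m} B_q(h i, h j)`.
The Poincaré equation forces `h i` to be homogeneous of degree `i`, and on homogeneous arguments
`(q^{i+j+1} - 1) B_q(h i, h j) = S_1 h_i h_j + Ω((q^i - 1) h_i · h_j)`. Expanding `(q^i - 1) h_i`
by the Poincaré equation, `Ω` turns each leading `S_t` into `S_{t+1}`, and summing over
`i + j = m` reassembles `∑_{t ≥ 1} S_t [h^{t+1}]_{m+1-t} = (q^{m+1} - 1) h_{m+1}`.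
-/

noncomputable section

open Finset

/-- The operator `Ω` on words: `Ω S^{(i_1,…,i_r)} = S^{(i_1+1,i_2,…,i_r)}`, and
`Ω S^∅ = S_1`. -/
def omegaW : List ℕ → List ℕ
  | [] => [1]
  | a :: l => (a + 1) :: l

/-- The bilinear map `B_q`, defined on the complete basis by
`B_q(S^I, S^J) = (S^{1IJ} + (q^{|I|}-1) Ω S^{IJ}) / (q^{|I|+|J|+1}-1)`. -/
def Bq (x y : NSym) : NSym :=
  Finsupp.sum x.coeff fun I a => Finsupp.sum y.coeff fun J b =>
    (a * b * ((RatFunc.X : RatFunc ℚ) ^ (I.toList.sum + J.toList.sum + 1) - 1)⁻¹) •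
      (Sw (1 :: (I.toList ++ J.toList)) +
        ((RatFunc.X : RatFunc ℚ) ^ I.toList.sum - 1) • Sw (omegaW (I.toList ++ J.toList)))

local notation "q" => (RatFunc.X : RatFunc ℚ)

theorem RatFunc.X_pow_ne_one {K : Type*} [CommRing K] [IsDomain K] {m : ℕ} (hm : m ≠ 0) :
    (RatFunc.X : RatFunc K) ^ m ≠ 1 := fun h =>
  (RatFunc.transcendental_X.pow (Nat.pos_of_ne_zero hm)) (h ▸ isAlgebraic_one)

theorem Finset.Nat.sum_antidiagonal_sum_Icc_fst {M : Type*} [AddCommMonoid M] (a m : ℕ)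
    (F : ℕ → ℕ → ℕ → M) :
    ∑ p ∈ antidiagonal m, ∑ t ∈ Icc a p.1, F t (p.1 - t) p.2 =
      ∑ t ∈ Icc a m, ∑ c ∈ antidiagonal (m - t), F t c.1 c.2 := by
  rw [Finset.sum_comm' (t' := Icc a m) (s' := fun t => {p ∈ antidiagonal m | t ≤ p.1})]
  · refine Finset.sum_congr rfl fun t ht => ?_
    rw [Finset.Nat.antidiagonal_filter_le_fst_of_le (Finset.mem_Icc.1 ht).2, Finset.sum_map]
    simp
  · intro p t
    simp only [Finset.mem_Icc, Finset.mem_filter, HasAntidiagonal.mem_antidiagonal]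
    omega

section Grading

variable (R : Type*) [Semiring R]

/-- `S^I` has degree `|I|`, the sum (not the length) of the word `I`. -/
def homogeneousSubmodule (m : ℕ) : Submodule R (MonoidAlgebra R (FreeMonoid ℕ)) where
  carrier := {x | ∀ w ∈ x.coeff.support, w.toList.sum = m}
  zero_mem' w hw := by simp at hw
  add_mem' {x y} hx hy w hw := by
    classical exact (Finset.mem_union.1 (Finsupp.support_add hw)).elim (hx w) (hy w)
  smul_mem' _ _ hx w hw := hx w (Finsupp.support_smul hw)

variable {R}

theorem single_mem_homogeneousSubmodule (w : FreeMonoid ℕ) (r : R) :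
    MonoidAlgebra.single w r ∈ homogeneousSubmodule R w.toList.sum := fun v hv => by
  rw [Finset.mem_singleton.1 (Finsupp.support_single_subset hv)]

instance : SetLike.GradedMonoid (homogeneousSubmodule R) where
  one_mem := single_mem_homogeneousSubmodule 1 1
  mul_mem a b x y hx hy w hw := by
    classical
    obtain ⟨u, hu, v, hv, rfl⟩ :=
      Finset.mem_mul.1 (MonoidAlgebra.support_coeff_mul_subset x y hw)
    rw [FreeMonoid.toList_mul, List.sum_append, hx u hu, hy v hv]

end Grading

section GradedPow

variable {A : Type*} [Semiring A]

/-- The degree-`d` component of `(h 0 + h 1 + ⋯) ^ k` when each `h i` has degree `i`. -/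
def gradedPow (h : ℕ → A) (k d : ℕ) : A :=
  ∑ f ∈ Finset.Nat.antidiagonalTuple k d, (List.ofFn fun i => h (f i)).prod

theorem gradedPow_one (h : ℕ → A) (d : ℕ) : gradedPow h 1 d = h d := by
  simp [gradedPow]

theorem gradedPow_succ (h : ℕ → A) (k d : ℕ) :
    gradedPow h (k + 1) d = ∑ p ∈ antidiagonal d, gradedPow h k p.1 * h p.2 := by
  simp only [gradedPow, Finset.sum_mul]
  rw [Finset.sum_sigma']
  refine Finset.sum_nbij' (fun f => ⟨(∑ i : Fin k, f i.castSucc, f (Fin.last k)), Fin.init f⟩)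
    (fun x => Fin.snoc x.2 x.1.2) ?_ ?_ ?_ ?_ ?_
  · intro f hf
    rw [Finset.Nat.mem_antidiagonalTuple, Fin.sum_univ_castSucc] at hf
    simp [Finset.Nat.mem_antidiagonalTuple, hf, Fin.init]
  · rintro ⟨⟨a, b⟩, f⟩ hx
    simp only [Finset.mem_sigma, HasAntidiagonal.mem_antidiagonal,
      Finset.Nat.mem_antidiagonalTuple] at hx ⊢
    simp [Fin.sum_univ_castSucc, hx]
  · intro f _
    exact Fin.snoc_init_self f
  · rintro ⟨⟨a, b⟩, f⟩ hx
    simp only [Finset.mem_sigma, HasAntidiagonal.mem_antidiagonal,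
      Finset.Nat.mem_antidiagonalTuple] at hx
    simp [hx.2]
  · intro f _
    rw [List.ofFn_succ', List.prod_concat]
    rfl

theorem gradedPow_mem {σ : Type*} [SetLike σ A] [AddSubmonoidClass σ A] (𝒜 : ℕ → σ)
    [SetLike.GradedMonoid 𝒜] {h : ℕ → A} {k d : ℕ} (hh : ∀ i ≤ d, h i ∈ 𝒜 i) :
    gradedPow h k d ∈ 𝒜 d := by
  refine sum_mem fun f hf => ?_
  rw [Finset.Nat.mem_antidiagonalTuple] at hf
  have hle : ∀ j, f j ≤ d := fun j => hf ▸ Finset.single_le_sum (by simp) (Finset.mem_univ j)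
  simpa [List.sum_ofFn, hf] using
    SetLike.list_prod_ofFn_mem_graded f (fun i => h (f i)) fun j => hh _ (hle j)

end GradedPow

theorem single_eq_smul_Sw (w : FreeMonoid ℕ) (r : RatFunc ℚ) :
    MonoidAlgebra.single w r = r • Sw w.toList := by
  simp [Sw]

theorem Sw_mul_Sw (l l' : List ℕ) : Sw l * Sw l' = Sw (l ++ l') := by
  simp [Sw, MonoidAlgebra.single_mul_single]

theorem Sw_mem_homogeneousSubmodule (l : List ℕ) :
    Sw l ∈ homogeneousSubmodule (RatFunc ℚ) l.sum :=
  single_mem_homogeneousSubmodule _ _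

def Omega : NSym →ₗ[RatFunc ℚ] NSym :=
  MonoidAlgebra.mapDomainLinearMap _ _ fun w => FreeMonoid.ofList (omegaW w.toList)

theorem Omega_Sw (l : List ℕ) : Omega (Sw l) = Sw (omegaW l) :=
  MonoidAlgebra.mapDomainLinearMap_single _ _ _

theorem Omega_Sw_cons_mul (a : ℕ) (l : List ℕ) (x : NSym) :
    Omega (Sw (a :: l) * x) = Sw ((a + 1) :: l) * x := by
  induction x using MonoidAlgebra.induction_linear with
  | zero => simp
  | add x y hx hy => rw [mul_add, map_add, hx, hy, mul_add]
  | single w r =>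
    rw [single_eq_smul_Sw, mul_smul_comm, mul_smul_comm, map_smul, Sw_mul_Sw, Sw_mul_Sw,
      Omega_Sw]
    rfl

theorem Bq_of_mem_homogeneousSubmodule {a b : ℕ} {x y : NSym}
    (hx : x ∈ homogeneousSubmodule _ a) (hy : y ∈ homogeneousSubmodule _ b) :
    Bq x y = (q ^ (a + b + 1) - 1)⁻¹ • (Sw [1] * (x * y) + (q ^ a - 1) • Omega (x * y)) := by
  have hxy : x * y = ∑ I ∈ x.coeff.support, ∑ J ∈ y.coeff.support,
      (x.coeff I * y.coeff J) • Sw (I * J).toList := by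
    simp only [← single_eq_smul_Sw]
    exact MonoidAlgebra.mul_def x y
  rw [hxy, Bq]
  simp only [Finset.mul_sum, map_sum, Finset.smul_sum, ← Finset.sum_add_distrib]
  refine Finset.sum_congr rfl fun I hI => Finset.sum_congr rfl fun J hJ => ?_
  dsimp only
  rw [hx I hI, hy J hJ, mul_smul_comm, map_smul, Sw_mul_Sw, FreeMonoid.toList_mul, Omega_Sw,
    List.singleton_append]
  simp only [smul_add, smul_smul]
  congr 2 <;> ring

def IsQuadraticFixedPoint (g : ℕ → NSym) : Prop :=
  g 0 = 1 ∧ ∀ n : ℕ, 1 ≤ n → g n = ∑ p ∈ antidiagonal (n - 1), Bq (g p.1) (g p.2)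

def IsPoincareSolution (h : ℕ → NSym) : Prop :=
  h 0 = 1 ∧ ∀ m : ℕ, 1 ≤ m →
    q ^ m • h m = h m + ∑ n ∈ Icc 1 m, Sw [n] * gradedPow h (n + 1) (m - n)

theorem IsQuadraticFixedPoint.unique {g g' : ℕ → NSym} (hg : IsQuadraticFixedPoint g)
    (hg' : IsQuadraticFixedPoint g') : g = g' := by
  funext n
  induction n using Nat.strong_induction_on with
  | _ n ih =>
    rcases n.eq_zero_or_pos with rfl | hn
    · rw [hg.1, hg'.1]
    · rw [hg.2 n hn, hg'.2 n hn]
      refine Finset.sum_congr rfl fun p hp => ?_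
      rw [HasAntidiagonal.mem_antidiagonal] at hp
      rw [ih p.1 (by omega), ih p.2 (by omega)]

namespace IsPoincareSolution

theorem sub_one_smul {h : ℕ → NSym} (H : IsPoincareSolution h) (m : ℕ) :
    (q ^ m - 1) • h m = ∑ n ∈ Icc 1 m, Sw [n] * gradedPow h (n + 1) (m - n) := by
  rcases m.eq_zero_or_pos with rfl | hm
  · simp
  · rw [sub_smul, one_smul, H.2 m hm, add_sub_cancel_left]

theorem mem_homogeneousSubmodule {h : ℕ → NSym} (H : IsPoincareSolution h) (m : ℕ) :
    h m ∈ homogeneousSubmodule _ m := by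
  induction m using Nat.strong_induction_on with
  | _ m ih =>
    rcases m.eq_zero_or_pos with rfl | hm
    · rw [H.1]
      exact SetLike.GradedOne.one_mem
    · rw [← inv_smul_smul₀ (sub_ne_zero.2 (RatFunc.X_pow_ne_one (K := ℚ) hm.ne')) (h m),
        H.sub_one_smul]
      refine Submodule.smul_mem _ _ (Submodule.sum_mem _ fun n hn => ?_)
      obtain ⟨hn, hnm⟩ := Finset.mem_Icc.1 hn
      have := SetLike.mul_mem_graded (Sw_mem_homogeneousSubmodule [n])
        (gradedPow_mem (homogeneousSubmodule _) (k := n + 1) (d := m - n)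
          fun i hi => ih i (by omega))
      rwa [List.sum_singleton, Nat.add_sub_cancel' hnm] at this

theorem isQuadraticFixedPoint {h : ℕ → NSym} (H : IsPoincareSolution h) :
    IsQuadraticFixedPoint h := by
  refine ⟨H.1, fun n hn => ?_⟩
  obtain ⟨m, rfl⟩ := Nat.exists_eq_add_of_le' hn
  have hBq : ∑ p ∈ antidiagonal m, Bq (h p.1) (h p.2) = (q ^ (m + 1) - 1)⁻¹ •
      (Sw [1] * ∑ p ∈ antidiagonal m, h p.1 * h p.2 +
        ∑ p ∈ antidiagonal m, (q ^ p.1 - 1) • Omega (h p.1 * h p.2)) := by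
    rw [Finset.mul_sum, ← Finset.sum_add_distrib, Finset.smul_sum]
    refine Finset.sum_congr rfl fun p hp => ?_
    rw [HasAntidiagonal.mem_antidiagonal] at hp
    rw [Bq_of_mem_homogeneousSubmodule (H.mem_homogeneousSubmodule p.1)
      (H.mem_homogeneousSubmodule p.2), hp]
  have hΩ : ∑ p ∈ antidiagonal m, (q ^ p.1 - 1) • Omega (h p.1 * h p.2) =
      ∑ t ∈ Icc 2 (m + 1), Sw [t] * gradedPow h (t + 1) (m + 1 - t) :=
    calc _ = ∑ p ∈ antidiagonal m, ∑ t ∈ Icc 1 p.1,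
          Sw [t + 1] * (gradedPow h (t + 1) (p.1 - t) * h p.2) := by
          refine Finset.sum_congr rfl fun p _ => ?_
          rw [← map_smul, ← smul_mul_assoc, H.sub_one_smul, Finset.sum_mul, map_sum]
          simp only [mul_assoc, Omega_Sw_cons_mul]
      _ = ∑ t ∈ Icc 1 m, Sw [t + 1] * gradedPow h (t + 2) (m - t) := by
          rw [Finset.Nat.sum_antidiagonal_sum_Icc_fst 1 m fun t c₁ c₂ =>
            Sw [t + 1] * (gradedPow h (t + 1) c₁ * h c₂)]
          simp only [gradedPow_succ, Finset.mul_sum]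
      _ = _ := by
          rw [← Finset.map_add_right_Icc 1 m 1, Finset.sum_map]
          simp
  have hpair : ∑ p ∈ antidiagonal m, h p.1 * h p.2 = gradedPow h 2 m :=
    ((gradedPow_succ h 1 m).trans (by simp only [gradedPow_one])).symm
  have hsplit : ∑ t ∈ Icc 1 (m + 1), Sw [t] * gradedPow h (t + 1) (m + 1 - t) =
      Sw [1] * gradedPow h 2 m +
        ∑ t ∈ Icc 2 (m + 1), Sw [t] * gradedPow h (t + 1) (m + 1 - t) := by
    rw [← Finset.insert_Icc_add_one_left_eq_Icc (by omega : 1 ≤ m + 1),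
      Finset.sum_insert (by simp)]
    simp
  rw [Nat.add_sub_cancel, hBq, hpair, hΩ, ← hsplit, ← H.sub_one_smul,
    inv_smul_smul₀ (sub_ne_zero.2 (RatFunc.X_pow_ne_one (K := ℚ) m.succ_ne_zero))]

end IsPoincareSolution

/-- **The quadratic fixed point equation solves the Poincaré equation.** The unique solution
of `g = 1 + B_q(g,g)` (componentwise: `g_n = Σ_{i+j=n-1} B_q(g_i, g_j)` for `n ≥ 1`,
`g_0 = 1`) coincides with the solution `h` of the noncommutative Poincaré equation
`h(qA) = Σ_{n≥0} S_n(A) h(A)^{n+1}` (componentwise: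
`q^m • h_m = h_m + Σ_{n=1}^m S_n Σ_{i_1+⋯+i_{n+1}=m-n} h_{i_1}⋯h_{i_{n+1}}`, `h_0 = 1`). -/
theorem quadratic_fixed_point_eq_poincare
    (g h : ℕ → NSym) (hg0 : g 0 = 1) (hh0 : h 0 = 1)
    (hg : ∀ n : ℕ, 1 ≤ n →
      g n = ∑ p ∈ Finset.HasAntidiagonal.antidiagonal (n - 1), Bq (g p.1) (g p.2))
    (hh : ∀ m : ℕ, 1 ≤ m →
      ((RatFunc.X : RatFunc ℚ) ^ m) • h m =
        h m + ∑ n ∈ Finset.Icc 1 m, Sw [n] *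
          ∑ f ∈ Finset.Nat.antidiagonalTuple (n + 1) (m - n),
            (List.ofFn fun i => h (f i)).prod) :
    ∀ n : ℕ, g n = h n :=
  congrFun (IsQuadraticFixedPoint.unique ⟨hg0, hg⟩
    (IsPoincareSolution.isQuadraticFixedPoint ⟨hh0, hh⟩))
end
end

section
/- The map φ defined recursively by φ(∅)=∅, φ(•)=1, and φ(T) = φ(T_2)·(φ(T_1) shifted by max(φ(T_2))-1)·(|T_1| + max(φ(T_2))) for a binary tree T with left subtree T_1 and right subtree T_2 (with max(φ(∅)) := 1), is a bijection from binary trees with n internal nodes to nondecreasing parking functions of length n. -/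
noncomputable section

/-- Binary trees: the empty tree, or a root with a left and a right subtree. -/
inductive BTree where
  | nil : BTree
  | node (l r : BTree) : BTree

/-- Number of (internal) nodes of a binary tree. -/
def bsize : BTree → ℕ
  | .nil => 0
  | .node l r => 1 + bsize l + bsize r

/-- `max` of a word, with the convention that the max of the empty word is `1`. -/
def maxw (w : List ℕ) : ℕ := w.foldr max 1

/-- The map `φ`: `φ(∅) = ∅` and, for a tree with left subtree `T₁` and right subtree `T₂`,
`φ(T) = φ(T₂) · (φ(T₁) shifted by max(φ(T₂)) - 1) · (|T₁| + max(φ(T₂)))`. -/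
def phi : BTree → List ℕ
  | .nil => []
  | .node t1 t2 =>
      phi t2 ++ (phi t1).map (· + (maxw (phi t2) - 1)) ++ [bsize t1 + maxw (phi t2)]

/-- A nondecreasing parking function of length `n`: a weakly increasing word
`a_1 ≤ ⋯ ≤ a_n` of positive integers with `a_i ≤ i`. -/
def IsNDPF (w : List ℕ) : Prop :=
  List.Pairwise (· ≤ ·) w ∧ ∀ i, i < w.length → 1 ≤ w.getD i 0 ∧ w.getD i 0 ≤ i + 1

/-! `φ (node T₁ T₂) = glue (φ T₂) (φ T₁)`, where `glue u v` is `u`, then `v` shifted by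
`max u - 1`, then the letter `|v| + max u`. Gluing two nondecreasing parking functions yields
one, and every nonempty nondecreasing parking function is such a glue in exactly one way, with
shorter factors; induction on trees and on word length turns this unique factorisation into
the bijection. -/

namespace List

variable {α : Type*}

theorem getD_le_getD_of_le [Preorder α] {l : List α} (hl : l.Pairwise (· ≤ ·)) {d : α} {i j : ℕ}
    (hij : i ≤ j) (hj : j < l.length) : l.getD i d ≤ l.getD j d := by
  rw [getD_eq_getElem _ _ (hij.trans_lt hj), getD_eq_getElem _ _ hj]
  exact hl.sortedLE.getElem_le_getElem_of_le hij

theorem getD_append_append_singleton_of_lt (u r : List α) (a d : α) {j : ℕ} (hj : j < r.length) :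
    (u ++ r ++ [a]).getD (u.length + j) d = r.getD j d := by
  simp [getD_eq_getElem?_getD, getElem?_append, hj]

theorem getD_append_append_singleton_length (u r : List α) (a d : α) :
    (u ++ r ++ [a]).getD (u.length + r.length) d = a := by
  simp [getD_eq_getElem?_getD]

theorem getD_dropLast_drop (l : List α) (d : α) {L j : ℕ} (h : L + j + 1 < l.length) :
    (l.drop L).dropLast.getD j d = l.getD (L + j) d := by
  simp [getD_eq_getElem?_getD, show j < l.length - L - 1 by omega, show L + j < l.length by omega]

theorem take_append_dropLast_drop {l : List α} {n L : ℕ} (d : α) (hn : l.length = n + 1)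
    (hL : L ≤ n) : l.take L ++ (l.drop L).dropLast ++ [l.getD n d] = l := by
  have hdrop : l.drop L ≠ [] := by simp; omega
  have hlast : (l.drop L).getLast hdrop = l.getD n d := by
    rw [getLast_drop, getLast_eq_getElem, getD_eq_getElem _ _ (by omega)]
    simp [hn]
  rw [append_assoc, ← hlast, dropLast_append_getLast, take_append_drop]

end List

theorem maxw_le_iff {w : List ℕ} {b : ℕ} : maxw w ≤ b ↔ 1 ≤ b ∧ ∀ x ∈ w, x ≤ b := by
  induction w with
  | nil => simp [maxw]
  | cons a l ih =>
    simp only [maxw, List.foldr_cons, max_le_iff, List.mem_cons, forall_eq_or_imp] at *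
    tauto

theorem one_le_maxw (w : List ℕ) : 1 ≤ maxw w :=
  (maxw_le_iff.1 le_rfl).1

theorem le_maxw_of_mem {w : List ℕ} {x : ℕ} (h : x ∈ w) : x ≤ maxw w :=
  (maxw_le_iff.1 le_rfl).2 x h

theorem Nat.exists_greatest_le {P : ℕ → Prop} {n : ℕ} (h0 : P 0) :
    ∃ L ≤ n, P L ∧ ∀ i, L < i → i ≤ n → ¬P i := by
  classical
  exact ⟨_, Nat.findGreatest_le n, Nat.findGreatest_spec (Nat.zero_le n) h0,
    fun _ => Nat.findGreatest_is_greatest⟩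

def glue (u v : List ℕ) : List ℕ :=
  u ++ v.map (· + (maxw u - 1)) ++ [v.length + maxw u]

namespace IsNDPF

variable {w : List ℕ}

theorem one_le_of_mem (hw : IsNDPF w) {x : ℕ} (hx : x ∈ w) : 1 ≤ x := by
  obtain ⟨i, hi, rfl⟩ := List.getElem_of_mem hx
  simpa [← List.getD_eq_getElem w 0 hi] using (hw.2 i hi).1

theorem le_length_of_mem (hw : IsNDPF w) {x : ℕ} (hx : x ∈ w) : x ≤ w.length := by
  obtain ⟨i, hi, rfl⟩ := List.getElem_of_mem hx
  have := (hw.2 i hi).2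
  rw [List.getD_eq_getElem w 0 hi] at this
  omega

theorem maxw_le_length_add_one (hw : IsNDPF w) : maxw w ≤ w.length + 1 :=
  maxw_le_iff.2 ⟨by omega, fun _ hx => (hw.le_length_of_mem hx).trans (Nat.le_succ _)⟩

theorem pairwise_cons_one (hw : IsNDPF w) : (1 :: w).Pairwise (· ≤ ·) :=
  List.pairwise_cons.2 ⟨fun _ => hw.one_le_of_mem, hw.1⟩

theorem take (hw : IsNDPF w) (L : ℕ) : IsNDPF (w.take L) := by
  refine ⟨hw.1.sublist (List.take_sublist _ _), fun i hi => ?_⟩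
  rw [List.length_take, Nat.lt_min] at hi
  simpa [List.getD_eq_getElem?_getD, hi.1] using hw.2 i hi.2

/-- Padding `w` with a leading `1` encodes the convention `maxw [] = 1`. -/
theorem maxw_take (hw : IsNDPF w) {L : ℕ} (hL : L ≤ w.length) :
    maxw (w.take L) = (1 :: w).getD L 0 := by
  have hmono : ∀ i, i ≤ L → (1 :: w).getD i 0 ≤ (1 :: w).getD L 0 := fun i hi =>
    List.getD_le_getD_of_le hw.pairwise_cons_one hi (by simpa [Nat.lt_succ_iff] using hL)
  refine le_antisymm (maxw_le_iff.2 ⟨?_, fun x hx => ?_⟩) ?_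
  · simpa using hmono 0 (Nat.zero_le L)
  · obtain ⟨i, hi, rfl⟩ := List.getElem_of_mem hx
    rw [List.length_take, Nat.lt_min] at hi
    simpa [List.getD_eq_getElem?_getD, hi.1, hi.2] using hmono (i + 1) hi.1
  · cases L with
    | zero => exact one_le_maxw _
    | succ L =>
      rw [List.getD_cons_succ, List.getD_eq_getElem _ _ hL]
      exact le_maxw_of_mem (List.mem_iff_getElem.2 ⟨L, by simp; omega, by simp⟩)

theorem append {u v : List ℕ} (hu : IsNDPF u) (hv : v.Pairwise (· ≤ ·))
    (huv : ∀ a ∈ u, ∀ b ∈ v, a ≤ b)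
    (hb : ∀ j < v.length, 1 ≤ v.getD j 0 ∧ v.getD j 0 ≤ u.length + j + 1) :
    IsNDPF (u ++ v) := by
  refine ⟨List.pairwise_append.2 ⟨hu.1, hv, huv⟩, fun i hi => ?_⟩
  rw [List.length_append] at hi
  by_cases h : i < u.length
  · rw [List.getD_append _ _ _ _ h]
    exact hu.2 i h
  · rw [List.getD_append_right _ _ _ _ (by omega)]
    have := hb (i - u.length) (by omega)
    omega

end IsNDPF

theorem isNDPF_glue {u v : List ℕ} (hu : IsNDPF u) (hv : IsNDPF v) : IsNDPF (glue u v) := by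
  have hm := hu.maxw_le_length_add_one
  have hshift : ∀ b ∈ v.map (· + (maxw u - 1)), maxw u ≤ b ∧ b ≤ v.length + maxw u - 1 := by
    simp only [List.mem_map]
    rintro _ ⟨x, hx, rfl⟩
    have := hv.one_le_of_mem hx
    have := hv.le_length_of_mem hx
    have := one_le_maxw u
    constructor <;> omega
  refine (hu.append ?_ ?_ ?_).append (by simp) ?_ ?_
  · exact List.pairwise_map.2 (hv.1.imp (Nat.add_le_add_right · _))
  · exact fun a ha b hb => (le_maxw_of_mem ha).trans (hshift b hb).1
  · intro j hj
    rw [List.length_map] at hj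
    have := hv.2 j hj
    simp only [List.getD_eq_getElem?_getD, List.getElem?_map, hj, List.getElem?_eq_getElem,
      Option.map_some, Option.getD_some] at this ⊢
    constructor <;> omega
  · simp only [List.mem_append, List.mem_singleton]
    rintro a (ha | ha) b rfl
    · have := le_maxw_of_mem ha
      omega
    · have := hshift a ha
      omega
  · intro j hj
    simp only [List.length_singleton, Nat.lt_one_iff] at hj
    subst hj
    simp only [List.getD_cons_zero, List.length_append, List.length_map]
    have := one_le_maxw u
    omega

theorem getD_glue_of_lt (u v : List ℕ) {j : ℕ} (hj : j < v.length) :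
    (glue u v).getD (u.length + j) 0 = v.getD j 0 + (maxw u - 1) := by
  rw [glue, List.getD_append_append_singleton_of_lt _ _ _ _ (by simpa using hj)]
  simp [List.getD_eq_getElem?_getD, hj]

theorem getD_glue_length (u v : List ℕ) :
    (glue u v).getD (u.length + v.length) 0 = v.length + maxw u := by
  have := List.getD_append_append_singleton_length u (v.map (· + (maxw u - 1)))
    (v.length + maxw u) 0
  rwa [List.length_map] at this

theorem length_glue (u v : List ℕ) : (glue u v).length = u.length + v.length + 1 := by
  simp [glue, Nat.add_assoc]

theorem take_length_glue (u v : List ℕ) : (glue u v).take u.length = u := by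
  simp [glue]

/-- If a prefix `u'` of `glue u v` were longer than `u`, its maximum would be read off
inside the shifted copy of `v` and hence be too small to produce the common last letter. -/
theorem length_le_of_glue_eq {u v u' v' : List ℕ} (hu : IsNDPF u) (hv : IsNDPF v)
    (h : glue u v = glue u' v') : u'.length ≤ u.length := by
  by_contra! hlt
  have hw := isNDPF_glue hu hv
  have hwlen := length_glue u v
  have hlen := congrArg List.length h
  rw [length_glue, length_glue] at hlen
  have hlast := getD_glue_length u' v'
  rw [← h, show u'.length + v'.length = u.length + v.length by omega, getD_glue_length] at hlast
  obtain ⟨j, hj⟩ : ∃ j, u'.length = u.length + j + 1 := ⟨u'.length - u.length - 1, by omega⟩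
  have hmax : maxw u' = v.getD j 0 + (maxw u - 1) := by
    rw [← take_length_glue u' v', ← h, hw.maxw_take (by omega), hj, List.getD_cons_succ,
      getD_glue_of_lt u v (by omega)]
  have := (hv.2 j (by omega)).2
  have := one_le_maxw u
  omega

theorem eq_and_eq_of_glue_eq {u v u' v' : List ℕ} (hu : IsNDPF u) (hv : IsNDPF v)
    (hu' : IsNDPF u') (hv' : IsNDPF v') (h : glue u v = glue u' v') : u = u' ∧ v = v' := by
  have hL : u.length = u'.length :=
    le_antisymm (length_le_of_glue_eq hu' hv' h.symm) (length_le_of_glue_eq hu hv h)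
  obtain rfl : u = u' := by rw [← take_length_glue u v, h, hL, take_length_glue]
  simp only [glue, List.append_assoc, List.append_cancel_left_eq] at h
  exact ⟨rfl, List.map_injective_iff.2 (add_left_injective _) (List.append_inj_left' h rfl)⟩

/-- With `x = 1 :: w`, the split point `L` is the last index `≤ n` at which `x i - i` still
exceeds its final value `x (n + 1) - (n + 1)`; since `x i - i` drops by at most one per step,
it drops by exactly one right after `L` and never climbs back. -/
theorem IsNDPF.exists_split {w : List ℕ} {n : ℕ} (hw : IsNDPF w) (hn : w.length = n + 1) :
    ∃ L ≤ n, w.getD n 0 = maxw (w.take L) + (n - L) ∧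
      ∀ j < n - L, maxw (w.take L) ≤ w.getD (L + j) 0 ∧ w.getD (L + j) 0 ≤ maxw (w.take L) + j := by
  set x := 1 :: w with hx_def
  have hx : ∀ i j, i ≤ j → j ≤ n + 1 → x.getD i 0 ≤ x.getD j 0 := fun i j hij hj =>
    List.getD_le_getD_of_le hw.pairwise_cons_one hij (by simp; omega)
  have hxn : x.getD (n + 1) 0 = w.getD n 0 := List.getD_cons_succ
  obtain ⟨L, hLn, hPL, hlast⟩ :=
    Nat.exists_greatest_le (P := fun i => w.getD n 0 + i < x.getD i 0 + (n + 1)) (n := n) (by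
      have := (hw.2 n (by omega)).2
      simp only [x, List.getD_cons_zero]
      omega)
  have hnotP : ∀ i, L < i → i ≤ n + 1 → x.getD i 0 + (n + 1) ≤ w.getD n 0 + i := by
    intro i hLi hi
    rcases hi.lt_or_eq with hi | rfl
    · exact not_lt.1 (hlast i hLi (by omega))
    · omega
  refine ⟨L, hLn, ?_⟩
  rw [hw.maxw_take (by omega), ← hx_def]
  have hk : w.getD n 0 = x.getD L 0 + (n - L) := by
    have := hx L (L + 1) (by omega) (by omega)
    have := hnotP (L + 1) (by omega) (by omega)
    omega
  refine ⟨hk, fun j hj => ?_⟩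
  have hxj : x.getD (L + j + 1) 0 = w.getD (L + j) 0 := List.getD_cons_succ
  have := hx L (L + j + 1) (by omega) (by omega)
  have := hnotP (L + j + 1) (by omega) (by omega)
  constructor <;> omega

theorem exists_isNDPF_map_add_eq {r : List ℕ} {m : ℕ} (hm : 1 ≤ m) (hr : r.Pairwise (· ≤ ·))
    (hb : ∀ j < r.length, m ≤ r.getD j 0 ∧ r.getD j 0 ≤ m + j) :
    ∃ v, IsNDPF v ∧ v.length = r.length ∧ v.map (· + (m - 1)) = r := by
  refine ⟨r.map (· - (m - 1)), ⟨List.pairwise_map.2 (hr.imp (Nat.sub_le_sub_right · _)),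
    fun j hj => ?_⟩, List.length_map _, ?_⟩
  · rw [List.length_map] at hj
    have := hb j hj
    simp only [List.getD_eq_getElem?_getD, List.getElem?_map, List.getElem?_eq_getElem hj,
      Option.map_some, Option.getD_some] at this ⊢
    constructor <;> omega
  · rw [List.map_map]
    refine (List.map_congr_left fun b hb' => ?_).trans (List.map_id r)
    obtain ⟨j, hj, rfl⟩ := List.getElem_of_mem hb'
    have := (hb j hj).1
    rw [List.getD_eq_getElem _ _ hj] at this
    simp only [Function.comp_apply, id_eq]
    omega

theorem IsNDPF.exists_glue_eq {w : List ℕ} (hw : IsNDPF w) (hne : w ≠ []) :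
    ∃ u v, IsNDPF u ∧ IsNDPF v ∧ u.length < w.length ∧ v.length < w.length ∧ glue u v = w := by
  obtain ⟨n, hn⟩ : ∃ n, w.length = n + 1 := Nat.exists_eq_succ_of_ne_zero (by simpa using hne)
  obtain ⟨L, hLn, hk, hb⟩ := hw.exists_split hn
  have hrlen : ((w.drop L).dropLast).length = n - L := by simp; omega
  obtain ⟨v, hv, hvlen, hshift⟩ := exists_isNDPF_map_add_eq (one_le_maxw _)
    (hw.1.sublist ((List.dropLast_sublist _).trans (List.drop_sublist _ _)))
    (fun j hj => by rw [List.getD_dropLast_drop w 0 (L := L) (by omega)]; exact hb j (by omega))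
  refine ⟨w.take L, v, hw.take L, hv, by simp; omega, by omega, ?_⟩
  rw [glue, hshift, hvlen, hrlen, Nat.add_comm, ← hk]
  exact List.take_append_dropLast_drop 0 hn hLn

theorem length_phi (t : BTree) : (phi t).length = bsize t := by
  induction t with
  | nil => rfl
  | node t1 t2 ih1 ih2 => simp [phi, bsize, ih1, ih2]; omega

theorem phi_node (t1 t2 : BTree) : phi (.node t1 t2) = glue (phi t2) (phi t1) := by
  rw [phi, glue, length_phi]

theorem isNDPF_phi (t : BTree) : IsNDPF (phi t) := by
  induction t with
  | nil => exact ⟨List.Pairwise.nil, fun i hi => absurd hi (Nat.not_lt_zero i)⟩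
  | node t1 t2 ih1 ih2 => exact phi_node t1 t2 ▸ isNDPF_glue ih2 ih1

theorem phi_injective : Function.Injective phi := by
  intro s
  induction s with
  | nil =>
    rintro (_ | ⟨t1, t2⟩) h
    · rfl
    · simp [phi] at h
  | node s1 s2 ih1 ih2 =>
    rintro (_ | ⟨t1, t2⟩) h
    · simp [phi] at h
    · rw [phi_node, phi_node] at h
      obtain ⟨h2, h1⟩ :=
        eq_and_eq_of_glue_eq (isNDPF_phi s2) (isNDPF_phi s1) (isNDPF_phi t2) (isNDPF_phi t1) h
      rw [ih1 h1, ih2 h2]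

theorem IsNDPF.exists_phi_eq {w : List ℕ} (hw : IsNDPF w) : ∃ t, phi t = w := by
  rcases eq_or_ne w [] with rfl | hne
  · exact ⟨.nil, rfl⟩
  obtain ⟨u, v, hu, hv, hul, hvl, rfl⟩ := hw.exists_glue_eq hne
  obtain ⟨t2, rfl⟩ := hu.exists_phi_eq
  obtain ⟨t1, rfl⟩ := hv.exists_phi_eq
  exact ⟨.node t1 t2, phi_node t1 t2⟩
termination_by w.length

/-- **The bijection between binary trees and nondecreasing parking functions.** For every
`n`, the map `φ` is a bijection from binary trees with `n` internal nodes onto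
nondecreasing parking functions of length `n`. -/
theorem phi_bijective_on_trees (n : ℕ) :
    Set.BijOn phi {t : BTree | bsize t = n} {w : List ℕ | w.length = n ∧ IsNDPF w} := by
  refine ⟨fun t ht => ⟨(length_phi t).trans ht, isNDPF_phi t⟩, phi_injective.injOn,
    fun w ⟨hlen, hw⟩ => ?_⟩
  obtain ⟨t, rfl⟩ := hw.exists_phi_eq
  exact ⟨t, (length_phi t).symm.trans hlen, rfl⟩
end
end

section
/- The homogeneous components f_n of the solution of the noncommutative Schröder equation f_n = Σ_{k+l=n, l≥1 or k<n} q^k f_k S_l((k+1)A) with f_0 = 1 are given by f_n = L(S_n(A/(1-q))) = Σ_{I⊨n} q^{maj(I)} / ((1-q^{i_1})(1-q^{i_1+i_2})···(1-q^n)) · L(S^I), where L(S^I) = S_{i_1}(A) S_{i_2}((i_1+1)A) ··· S_{i_r}((i_1+...+i_{r-1}+1)A). -/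
noncomputable section

open Finset

/-- `S_k` (with `S_0 = 1`). -/
def Sk (k : ℕ) : NSym :=
  if k = 0 then 1 else MonoidAlgebra.single (FreeMonoid.ofList [k]) 1

/-- `S_n(mA)`: the coefficient of `t^n` in `(Σ_k S_k t^k)^m`. -/
def Sm (m n : ℕ) : NSym :=
  ∑ f ∈ Finset.Nat.antidiagonalTuple m n, (List.ofFn fun i => Sk (f i)).prod

/-- `L(S^I) = S_{i_1}(A) S_{i_2}((i_1+1)A) ⋯ S_{i_r}((i_1+⋯+i_{r-1}+1)A)`, computed with
an accumulator for the partial sums. -/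
def LS : ℕ → List ℕ → NSym
  | _, [] => 1
  | pre, i :: rest => Sm (pre + 1) i * LS (pre + i) rest

/-- `maj(I) = (r-1) i_1 + (r-2) i_2 + ⋯ + i_{r-1}`. -/
def majL (l : List ℕ) : ℕ :=
  ∑ j ∈ Finset.range l.length, (l.length - 1 - j) * l.getD j 0

/-- The denominator `(1-q^{i_1})(1-q^{i_1+i_2})⋯(1-q^{i_1+⋯+i_r})`. -/
def denomL (l : List ℕ) : RatFunc ℚ :=
  ∏ j ∈ Finset.range l.length,
    (1 - (RatFunc.X : RatFunc ℚ) ^ (∑ k ∈ Finset.range (j + 1), l.getD k 0))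

/-!
Removing the last block `n - k` of a composition `I ⊨ n` leaves a composition `J ⊨ k` with
`L(S^I) = L(S^J) S_{n-k}((k+1)A)` and `maj(I) = maj(J) + k`, while the denominator gains the
factor `1 - q^n`. Hence the right-hand side `g` satisfies
`(1 - q^n) g_n = Σ_{k<n} q^k g_k S_{n-k}((k+1)A)`, which is the Schröder recursion solved for
`f_n`; since `1 - q^n ≠ 0` for `n ≥ 1`, this determines every term from the previous ones.
-/

local notation "q" => (RatFunc.X : RatFunc ℚ)

theorem RatFunc.one_sub_X_pow_ne_zero {K : Type*} [CommRing K] [IsDomain K] {n : ℕ} (hn : n ≠ 0) :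
    (1 - RatFunc.X ^ n : RatFunc K) ≠ 0 := by
  rw [sub_ne_zero, ne_comm, ← RatFunc.algebraMap_X, ← map_pow,
    ← map_one (algebraMap (Polynomial K) _), (RatFunc.algebraMap_injective K).ne_iff]
  exact fun h => hn (by simpa using congrArg Polynomial.natDegree h)

theorem Composition.dropLast_sum_add_getLast {n : ℕ} (I : Composition n) (h : I.blocks ≠ []) :
    I.blocks.dropLast.sum + I.blocks.getLast h = n := by
  conv_rhs => rw [← I.blocks_sum, ← List.dropLast_append_getLast h]
  simp

theorem Composition.sum_eq_sum_range_append_singleton {M : Type*} [AddCommMonoid M] {n : ℕ}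
    (hn : n ≠ 0) (F : List ℕ → M) :
    ∑ I : Composition n, F I.blocks =
      ∑ k ∈ range n, ∑ J : Composition k, F (J.blocks ++ [n - k]) := by
  have hne (I : Composition n) : I.blocks ≠ [] := by simpa [Composition.blocks_eq_nil] using hn
  have hsplit (I : Composition n) := I.dropLast_sum_add_getLast (hne I)
  have hlast (I : Composition n) := I.blocks_pos (List.getLast_mem (hne I))
  have hblocks (I : Composition n) :
      I.blocks.dropLast ++ [n - I.blocks.dropLast.sum] = I.blocks := by
    rw [show n - I.blocks.dropLast.sum = I.blocks.getLast (hne I) by have := hsplit I; omega,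
      List.dropLast_append_getLast]
  rw [sum_sigma']
  refine sum_bij' (fun I _ => ⟨I.blocks.dropLast.sum,
      ⟨I.blocks.dropLast, fun hi => I.blocks_pos (List.dropLast_subset _ hi), rfl⟩⟩)
    (fun J hJ => ⟨J.2.blocks ++ [n - J.1], ?_, ?_⟩) ?_ (fun _ _ => mem_univ _)
    (fun I _ => Composition.ext (hblocks I))
    (fun J _ => Composition.sigma_eq_iff_blocks_eq.mpr List.dropLast_concat)
    (fun I _ => congrArg F (hblocks I).symm)
  · have hk := mem_range.mp (mem_sigma.mp hJ).1
    intro i hi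
    rcases List.mem_append.mp hi with hi | hi
    · exact J.2.blocks_pos hi
    · rw [List.mem_singleton.mp hi]
      omega
  · have hk := mem_range.mp (mem_sigma.mp hJ).1
    rw [List.sum_append, J.2.blocks_sum, List.sum_singleton]
    omega
  · intro I _
    have := hsplit I
    have := hlast I
    simp only [mem_sigma, mem_range, mem_univ, and_true]
    omega

theorem List.sum_range_getD_eq_sum_take {M : Type*} [AddCommMonoid M] (l : List M) (m : ℕ) :
    ∑ k ∈ Finset.range m, l.getD k 0 = (l.take m).sum := by
  induction l generalizing m with
  | nil => simp
  | cons x xs ih =>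
    cases m with
    | zero => simp
    | succ m =>
      rw [Finset.sum_range_succ', List.take_succ_cons, List.sum_cons, add_comm]
      simp only [List.getD_cons_succ, List.getD_cons_zero, ih]

theorem Sm_zero_right (m : ℕ) : Sm m 0 = 1 := by
  simp [Sm, Nat.antidiagonalTuple_zero_right, Sk]

theorem LS_append_singleton (pre : ℕ) (a : List ℕ) (l : ℕ) :
    LS pre (a ++ [l]) = LS pre a * Sm (pre + a.sum + 1) l := by
  induction a generalizing pre with
  | nil => simp [LS]
  | cons x xs ih => simp only [List.cons_append, LS, ih, List.sum_cons, add_assoc, mul_assoc]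

theorem majL_append_singleton (a : List ℕ) (l : ℕ) : majL (a ++ [l]) = majL a + a.sum := by
  have hsum : a.sum = ∑ j ∈ range a.length, a.getD j 0 := by
    rw [List.sum_range_getD_eq_sum_take, List.take_length]
  rw [majL, majL, List.length_append, List.length_singleton, sum_range_succ, Nat.add_sub_cancel,
    Nat.sub_self, zero_mul, add_zero, hsum, ← sum_add_distrib]
  refine sum_congr rfl fun j hj => ?_
  rw [List.getD_append _ _ _ _ (mem_range.mp hj),
    show a.length - j = a.length - 1 - j + 1 by have := mem_range.mp hj; omega]
  ring

theorem denomL_append_singleton (a : List ℕ) (l : ℕ) :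
    denomL (a ++ [l]) = denomL a * (1 - q ^ (a.sum + l)) := by
  simp only [denomL, List.sum_range_getD_eq_sum_take, List.length_append, List.length_singleton,
    prod_range_succ]
  congr 1
  · refine prod_congr rfl fun j hj => ?_
    rw [List.take_append_of_le_length (by have := mem_range.mp hj; omega)]
  · simp

def schroederSolution (n : ℕ) : NSym :=
  ∑ I : Composition n, (q ^ majL I.blocks / denomL I.blocks) • LS 0 I.blocks

theorem schroederSolution_zero : schroederSolution 0 = 1 := by
  have hnil (I : Composition 0) : I.blocks = [] := I.blocks_eq_nil.mpr rfl
  simp [schroederSolution, hnil, majL, denomL, LS, composition_card]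

theorem schroederSolution_rec {n : ℕ} (hn : n ≠ 0) :
    (1 - q ^ n) • schroederSolution n =
      ∑ k ∈ range n, q ^ k • (schroederSolution k * Sm (k + 1) (n - k)) := by
  rw [schroederSolution, Composition.sum_eq_sum_range_append_singleton hn
    (fun b => (q ^ majL b / denomL b) • LS 0 b), smul_sum]
  refine sum_congr rfl fun k hk => ?_
  rw [schroederSolution, sum_mul, smul_sum, smul_sum]
  refine sum_congr rfl fun J _ => ?_
  rw [LS_append_singleton, majL_append_singleton, denomL_append_singleton, J.blocks_sum, zero_add,
    Nat.add_sub_cancel' (mem_range.mp hk).le, smul_smul, smul_mul_assoc, smul_smul]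
  congr 1
  rw [pow_add, ← mul_div_assoc, mul_comm (1 - q ^ n),
    mul_div_mul_right _ _ (RatFunc.one_sub_X_pow_ne_zero hn)]
  ring

theorem eq_schroeder_iff (f : ℕ → NSym) (n : ℕ) :
    f n = ∑ p ∈ antidiagonal n, q ^ p.1 • (f p.1 * Sm (p.1 + 1) p.2) ↔
      (1 - q ^ n) • f n = ∑ k ∈ range n, q ^ k • (f k * Sm (k + 1) (n - k)) := by
  rw [Nat.sum_antidiagonal_eq_sum_range_succ_mk, sum_range_succ, Nat.sub_self, Sm_zero_right,
    mul_one, sub_smul, one_smul, sub_eq_iff_eq_add, add_comm]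

theorem eq_of_one_sub_X_pow_smul_eq {f g : ℕ → NSym} (h0 : f 0 = g 0)
    (hf : ∀ n ≠ 0, (1 - q ^ n) • f n = ∑ k ∈ range n, q ^ k • (f k * Sm (k + 1) (n - k)))
    (hg : ∀ n ≠ 0, (1 - q ^ n) • g n = ∑ k ∈ range n, q ^ k • (g k * Sm (k + 1) (n - k))) :
    f = g := by
  funext n
  induction n using Nat.strong_induction_on with
  | _ n ih =>
    rcases eq_or_ne n 0 with rfl | hn
    · exact h0
    refine smul_right_injective NSym (RatFunc.one_sub_X_pow_ne_zero hn)
      (?_ : (1 - q ^ n) • f n = (1 - q ^ n) • g n)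
    rw [hf n hn, hg n hn]
    exact sum_congr rfl fun k hk => by rw [ih k (mem_range.mp hk)]

/-- **Solution of the noncommutative Schröder equation.** If `f : ℕ → NSym` satisfies
`f_0 = 1` and `f_n = Σ_{k+l=n} q^k f_k S_l((k+1)A)`, then
`f_n = L(S_n(A/(1-q))) = Σ_{I ⊨ n} q^{maj(I)} / ((1-q^{i_1})(1-q^{i_1+i_2})⋯(1-q^n)) · L(S^I)`. -/
theorem schroeder_solution_klyachko
    (f : ℕ → NSym) (hf0 : f 0 = 1)
    (hrec : ∀ n : ℕ, 1 ≤ n →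
      f n = ∑ p ∈ Finset.HasAntidiagonal.antidiagonal n,
        ((RatFunc.X : RatFunc ℚ) ^ p.1) • (f p.1 * Sm (p.1 + 1) p.2)) :
    ∀ n : ℕ, 1 ≤ n →
      f n = ∑ I : Composition n,
        (((RatFunc.X : RatFunc ℚ) ^ majL I.blocks) / denomL I.blocks) • LS 0 I.blocks := by
  have hsol : f = schroederSolution :=
    eq_of_one_sub_X_pow_smul_eq (hf0.trans schroederSolution_zero.symm)
      (fun n hn => (eq_schroeder_iff f n).mp (hrec n (Nat.one_le_iff_ne_zero.mpr hn)))
      (fun _ => schroederSolution_rec)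
  exact fun n _ => congrFun hsol n
end
end
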